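/- Lower bound via a subspace: let G be a hypergraph and H a pattern hypergraph, and let U be a linear subspace of span{e_S : S ∈ E(G)} ⊆ ⋀V (V having orthonormal basis indexed by V(G)) such that for every copy H̃ of H in G there exists m ∈ U with supp(m) = E(H̃), where supp(m) = {S : ⟨e_S, m⟩ ≠ 0}. Then wsat(G, H) ≥ |E(G)| − dim U. -/

import Mathlib

open Finset

/-- A hypergraph is given by its (finite) set of edges, each a finite set of vertices.
`F` (a spanning subhypergraph of `G`, i.e. `F ⊆ G`) is weakly `H`-saturated in `G` if
the missing edges of `F` can be ordered so that each added edge lies in a copy of `H`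
present after its addition.  A copy of `H` is given by an injection `φ` of the vertices
of `H`; its edges are the `φ`-images of the edges of `H`. -/
def WeaklySat {α β : Type*} [DecidableEq α] (G : Finset (Finset α))
    (H : Finset (Finset β)) (F : Finset (Finset α)) : Prop :=
  F ⊆ G ∧ ∃ l : List (Finset α), l.Nodup ∧ l.toFinset = G \ F ∧
    ∀ j : Fin l.length, ∃ φ : β → α, Function.Injective φ ∧
      (∀ e ∈ H, e.image φ ∈ F ∪ (l.take (j.1 + 1)).toFinset) ∧
      l.get j ∈ H.image (fun e => e.image φ)

/-- Basis vector e_S of the exterior algebra over a vector space with orthonormal basis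
indexed by the vertices, modelled as `Finset α → ℝ`. -/
def eb {α : Type*} [DecidableEq (Finset α)] (S : Finset α) : Finset α → ℝ :=
  fun T => if T = S then 1 else 0

/-- Lower bound via a subspace: if `U ≤ span{e_S : S ∈ E(G)}` is such that every copy
`H̃` of `H` in `G` admits `m ∈ U` with `supp m = E(H̃)`, then
`wsat(G,H) ≥ |E(G)| − dim U`, i.e. `|E(G)| ≤ |E(F)| + dim U` for every weakly
`H`-saturated spanning subhypergraph `F` of `G`. -/
theorem wsat_lower_bound_subspace {α β : Type*} [DecidableEq α]
    (G : Finset (Finset α)) (H : Finset (Finset β))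
    (U : Submodule ℝ (Finset α → ℝ))
    (hU : U ≤ Submodule.span ℝ (eb '' (G : Set (Finset α))))
    (hcopy : ∀ φ : β → α, Function.Injective φ → (∀ e ∈ H, e.image φ ∈ G) →
      ∃ m ∈ U, {S : Finset α | m S ≠ 0} = ((H.image (fun e => e.image φ) : Finset (Finset α)) : Set (Finset α)))
    (F : Finset (Finset α)) (hF : WeaklySat G H F) :
    G.card ≤ F.card + Module.finrank ℝ U := by
  obtain ⟨hFG, l, hnd, hlF, hl⟩ := hF
  haveI : FiniteDimensional ℝ (Submodule.span ℝ (eb '' (G : Set (Finset α)))) :=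
    FiniteDimensional.span_of_finite ℝ (G.finite_toSet.image _)
  haveI : FiniteDimensional ℝ U := Submodule.finiteDimensional_of_le hU
  choose φ hφinj hedges hget using hl
  have hsubG : ∀ j : Fin l.length, ∀ e ∈ H, e.image (φ j) ∈ G := by
    intro j e he
    have h1 := hedges j e he
    rcases Finset.mem_union.mp h1 with h | h
    · exact hFG h
    · have h2 : e.image (φ j) ∈ l.toFinset :=
        List.mem_toFinset.mpr (List.take_subset _ l (List.mem_toFinset.mp h))
      rw [hlF] at h2
      exact (Finset.mem_sdiff.mp h2).1
  choose m hmU hsupp using fun j => hcopy (φ j) (hφinj j) (hsubG j)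
  have hgetmem : ∀ i : Fin l.length, l.get i ∈ G \ F := by
    intro i
    rw [← hlF]
    exact List.mem_toFinset.mpr (l.get_mem i)
  have hdiag : ∀ j : Fin l.length, m j (l.get j) ≠ 0 := by
    intro j
    have : l.get j ∈ ({S : Finset α | m j S ≠ 0} : Set (Finset α)) := by
      rw [hsupp j]
      exact_mod_cast hget j
    exact this
  have hzero : ∀ j i : Fin l.length, j < i → m j (l.get i) = 0 := by
    intro j i hji
    by_contra hne
    have hmem : l.get i ∈ H.image (fun e => e.image (φ j)) := by
      have h1 : l.get i ∈ ({S : Finset α | m j S ≠ 0} : Set (Finset α)) := hne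
      rw [hsupp j] at h1
      exact_mod_cast h1
    obtain ⟨e, he, heq⟩ := Finset.mem_image.mp hmem
    have h1 : l.get i ∈ F ∪ (l.take (j.1 + 1)).toFinset := heq ▸ hedges j e he
    rcases Finset.mem_union.mp h1 with h | h
    · exact absurd h (Finset.mem_sdiff.mp (hgetmem i)).2
    · have htake : l.get i ∈ l.take (j.1 + 1) := List.mem_toFinset.mp h
      have hdrop : l.get i ∈ l.drop (j.1 + 1) := by
        have hlt : j.1 + 1 + (i.1 - (j.1 + 1)) < l.length := by
          have := i.2
          omega
        have : (l.drop (j.1 + 1))[i.1 - (j.1 + 1)]'(by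
            rw [List.length_drop]; omega) = l.get i := by
          rw [List.getElem_drop]
          congr 1
          omega
        rw [← this]
        exact List.getElem_mem _
      exact List.disjoint_take_drop hnd (le_refl (j.1 + 1)) htake hdrop
  have hli : LinearIndependent ℝ m := by
    rw [Fintype.linearIndependent_iff]
    intro g hg
    by_contra hc
    push_neg at hc
    obtain ⟨i0, hi0⟩ := hc
    classical
    set s : Finset (Fin l.length) := Finset.univ.filter (fun i => g i ≠ 0) with hs_def
    have hs : s.Nonempty := ⟨i0, by simp [hs_def, hi0]⟩
    set i := s.max' hs with hi_def
    have hgi : g i ≠ 0 := by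
      have := s.max'_mem hs
      simpa [hs_def] using this
    have hgmax : ∀ j : Fin l.length, i < j → g j = 0 := by
      intro j hj
      by_contra hgj
      have : j ∈ s := by simp [hs_def, hgj]
      exact absurd (s.le_max' j this) (not_le.mpr hj)
    have heval := congrFun hg (l.get i)
    simp only [Finset.sum_apply, Pi.smul_apply, smul_eq_mul, Pi.zero_apply] at heval
    have hsingle : ∑ j, g j * m j (l.get i) = g i * m i (l.get i) := by
      apply Finset.sum_eq_single
      · intro j _ hji
        rcases lt_or_gt_of_ne hji with h | h
        · rw [hzero j i h, mul_zero]
        · rw [hgmax j h, zero_mul]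
      · intro h
        exact absurd (Finset.mem_univ i) h
    rw [hsingle] at heval
    exact hgi (by
      rcases mul_eq_zero.mp heval with h | h
      · exact h
      · exact absurd h (hdiag i))
  have hliU : LinearIndependent ℝ (fun j : Fin l.length => (⟨m j, hmU j⟩ : U)) := by
    apply LinearIndependent.of_comp U.subtype
    exact hli
  have hlen : l.length ≤ Module.finrank ℝ U := by
    simpa using hliU.fintype_card_le_finrank
  have hcard : (G \ F).card = l.length := by
    rw [← hlF, List.toFinset_card_of_nodup hnd]
  have hsum := Finset.card_sdiff_add_card_eq_card hFG
  omega
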